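/- Let k ≥ 2, ε > 0, 1 ≤ d ≤ k−1, n ≥ 1 and p ∈ Δ_k. If Y^n consists of n i.i.d. samples with distribution m = p Q_{k,ε,d}, then the empirical estimator is unbiased: E p̂_i(Y^n) = p_i for every i ∈ {1,…,k}; equivalently, the probability that the i-th coordinate of a single privatized sample equals 1 is (p_i + B)/A. -/

import Mathlib

open MeasureTheory ProbabilityTheory Filter Real
open scoped ENNReal NNReal

noncomputable section

/-- The probability simplex Δ_k ⊆ ℝ^k. -/
def simplex (k : ℕ) : Set (Fin k → ℝ) :=
  {p | (∀ i, 0 ≤ p i) ∧ ∑ i, p i = 1}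

/-- ε-local differential privacy for a Markov kernel from `Fin k` to `Y`. -/
def IsPrivate {Y : Type} [MeasurableSpace Y] {k : ℕ} (ε : ℝ) (Q : Kernel (Fin k) Y) : Prop :=
  IsMarkovKernel Q ∧
    ∀ S : Set Y, MeasurableSet S → ∀ x x' : Fin k,
      Q x S ≤ ENNReal.ofReal (Real.exp ε) * Q x' S

/-- The marginal distribution m = pQ of a privatized sample. -/
def marginal {Y : Type} [MeasurableSpace Y] {k : ℕ} (Q : Kernel (Fin k) Y)
    (p : Fin k → ℝ) : Measure Y :=
  ∑ i, ENNReal.ofReal (p i) • Q i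

/-- Worst-case ℓ_u^u risk of the mechanism `Q` with estimator `est` from `n` samples. -/
def risk {Y : Type} [MeasurableSpace Y] (k n : ℕ) (u : ℝ) (Q : Kernel (Fin k) Y)
    (est : (Fin n → Y) → Fin k → ℝ) : ℝ≥0∞ :=
  ⨆ p ∈ simplex k,
    ∫⁻ y, ENNReal.ofReal (∑ i, |est y i - p i| ^ u)
      ∂(Measure.pi fun _ : Fin n => marginal Q p)

/-- Minimax ℓ_u^u risk of the mechanism `Q` from `n` samples. -/
def minimaxRisk {Y : Type} [MeasurableSpace Y] (k n : ℕ) (u : ℝ) (Q : Kernel (Fin k) Y) : ℝ≥0∞ :=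
  ⨅ (est : (Fin n → Y) → Fin k → ℝ) (_ : Measurable est), risk k n u Q est

/-- Output alphabet Y_{k,d} : subsets of {1,…,k} of size d. -/
def Out (k d : ℕ) : Type := {S : Finset (Fin k) // S.card = d}

instance (k d : ℕ) : Fintype (Out k d) := Subtype.fintype _
instance (k d : ℕ) : MeasurableSpace (Out k d) := ⊤
instance (k d : ℕ) : MeasurableSingletonClass (Out k d) := ⟨fun _ => trivial⟩
instance (k d : ℕ) : DecidableEq (Out k d) := Subtype.instDecidableEq

/-- Q_{k,ε,d}(y|i). -/
def schemeP (k : ℕ) (ε : ℝ) (d : ℕ) (i : Fin k) (y : Out k d) : ℝ :=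
  (if i ∈ y.1 then Real.exp ε else 1) /
    ((k-1).choose (d-1) * Real.exp ε + (k-1).choose d)

/-- The scheme Q_{k,ε,d} as a Markov kernel. -/
def schemeKernel (k : ℕ) (ε : ℝ) (d : ℕ) : Kernel (Fin k) (Out k d) :=
  Kernel.ofFunOfCountable fun i =>
    ∑ y : Out k d, ENNReal.ofReal (schemeP k ε d i y) • Measure.dirac y

/-- Constant A of the empirical estimator. -/
def Aconst (k d : ℕ) (ε : ℝ) : ℝ :=
  (((k:ℝ)-1) * Real.exp ε + ((k:ℝ)-1)*((k:ℝ)-d)/d) / (((k:ℝ)-d)*(Real.exp ε - 1))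

/-- Constant B of the empirical estimator. -/
def Bconst (k d : ℕ) (ε : ℝ) : ℝ :=
  (((d:ℝ)-1) * Real.exp ε + ((k:ℝ)-d)) / (((k:ℝ)-d)*(Real.exp ε - 1))

/-- t_i(y^n): the number of privatized samples whose i-th coordinate is 1. -/
def tcount {k d n : ℕ} (i : Fin k) (y : Fin n → Out k d) : ℕ :=
  (Finset.univ.filter fun j => i ∈ (y j).1).card

/-- The empirical estimator p̂ under Q_{k,ε,d}. -/
def empEst (k d n : ℕ) (ε : ℝ) (y : Fin n → Out k d) (i : Fin k) : ℝ :=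
  Aconst k d ε * ((tcount i y : ℝ) / n) - Bconst k d ε

/-- Marginal probability (pQ_{k,ε,d})(y). -/
def margP (k : ℕ) (ε : ℝ) (d : ℕ) (p : Fin k → ℝ) (y : Out k d) : ℝ :=
  ∑ i, p i * schemeP k ε d i y

/-- Membership in D_{ε,E}: a finite-output ε-LDP scheme, given by the matrix
`q j v = Q(j|v)`, whose conditional probability ratios take only values 1 and e^ε. -/
def memDEE (k L : ℕ) (ε : ℝ) (q : Fin L → Fin k → ℝ) : Prop :=
  (∀ j v, 0 ≤ q j v) ∧ (∀ v, ∑ j, q j v = 1) ∧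
  (∀ j v v', q j v ≤ Real.exp ε * q j v') ∧
  (∀ j v, q j v / (⨅ v', q j v') ∈ ({1, Real.exp ε} : Set ℝ))

/-- q_j = (1/k) Σ_v q_{jv}. -/
def qrow {k L : ℕ} (q : Fin L → Fin k → ℝ) (j : Fin L) : ℝ :=
  (1/(k:ℝ)) * ∑ v, q j v

/-- A finite-output scheme (matrix) as a Markov kernel. -/
def matKernel (k L : ℕ) (q : Fin L → Fin k → ℝ) : Kernel (Fin k) (Fin L) :=
  Kernel.ofFunOfCountable fun v =>
    ∑ j, ENNReal.ofReal (q j v) • Measure.dirac j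

/-- C_u = E|X|^u for X standard normal. -/
def Cmom (u : ℝ) : ℝ := ∫ x, |x| ^ u ∂(gaussianReal 0 1)

/-- g(s) = (s e^ε + k − s)² / (s(k−s)). -/
def gfun (ε k s : ℝ) : ℝ := (s * Real.exp ε + k - s)^2 / (s * (k - s))

/-- d* is a minimizer of (d e^ε + k − d)²/(d(k−d)) over d ∈ {1,…,k−1}. -/
def IsOptDstar (k : ℕ) (ε : ℝ) (dstar : ℕ) : Prop :=
  dstar ∈ Finset.Icc 1 (k-1) ∧
    ∀ d ∈ Finset.Icc 1 (k-1), gfun ε k dstar ≤ gfun ε k d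

/-- M(k,ε). -/
def Mconst (k : ℕ) (ε : ℝ) (dstar : ℕ) : ℝ :=
  (((k:ℝ)-1)^2 / ((k:ℝ)^2 * (Real.exp ε - 1)^2)) * gfun ε k dstar

/-- The prior set P_n = {p ∈ Δ_k : ‖p − p_U‖₂ ≤ D/√n}. -/
def Pball (k : ℕ) (D : ℝ) (n : ℕ) : Set (Fin k → ℝ) :=
  {p | p ∈ simplex k ∧ Real.sqrt (∑ i, (p i - 1/(k:ℝ))^2) ≤ D / Real.sqrt n}

/-- The uniform distribution on P_n: normalized (k−1)-dimensional Hausdorff measure. -/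
def unifP (k : ℕ) (D : ℝ) (n : ℕ) : Measure (Fin k → ℝ) :=
  ((μH[((k:ℝ)-1)]) (Pball k D n))⁻¹ • (μH[((k:ℝ)-1)]).restrict (Pball k D n)

/-- Component-wise optimal Bayes ℓ_u^u risk for the finite-output scheme `q`,
with the uniform prior on P_n. -/
def bayesRisk (k L : ℕ) (u : ℝ) (q : Fin L → Fin k → ℝ) (D : ℝ) (n : ℕ) (i : Fin k) : ℝ≥0∞ :=
  ⨅ est : (Fin n → Fin L) → ℝ,
    ∫⁻ p, (∑ y : Fin n → Fin L,
        (∏ j, ENNReal.ofReal (∑ v, p v * q (y j) v)) *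
          ENNReal.ofReal (|est y - p i| ^ u))
      ∂(unifP k D n)

end

/-! An output `y` of `Q_{k,ε,d}` has probability `(1 + (e^ε - 1) p(y)) / Z` under `pQ`, where
`p(y) = ∑_{v ∈ y} p_v` and `Z` is the normalizing constant of the scheme. Summing over the
`C(k-1, d-1)` outputs that contain `i`, and double counting the `(d-1)`-subsets of `[k] \ {i}`
that contain a given `v`, shows that `P(i ∈ Y)` is an affine function of `p_i`; the constants `A`
and `B` of the estimator invert exactly this map. Unbiasedness follows, since `t_i` is a sum of
`n` indicators with mean `P(i ∈ Y)`. -/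

open Finset

section PowersetCard

variable {α M : Type*} [DecidableEq α] [AddCommMonoid M] {s : Finset α} {a : α}

theorem filter_notMem_powersetCard (s : Finset α) (a : α) (n : ℕ) :
    {S ∈ s.powersetCard n | a ∉ S} = (s.erase a).powersetCard n := by
  ext S
  simp only [mem_filter, mem_powersetCard, subset_erase]
  tauto

theorem card_filter_mem_powersetCard_succ (ha : a ∈ s) (e : ℕ) :
    #{S ∈ s.powersetCard (e + 1) | a ∈ S} = (#s - 1).choose e := by
  simpa [singleton_subset_iff] using
    card_filter_powersetCard_subset {a} s (e + 1) (singleton_subset_iff.2 ha) (by simp)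

theorem card_mul_card_filter_mem_powersetCard (ha : a ∈ s) (n : ℕ) :
    #s * #{S ∈ s.powersetCard n | a ∈ S} = n * (#s).choose n := by
  obtain ⟨m, hm⟩ : ∃ m, #s = m + 1 := ⟨#s - 1, by have := card_pos.2 ⟨a, ha⟩; omega⟩
  cases n with
  | zero => simp [powersetCard_zero]
  | succ e =>
    rw [card_filter_mem_powersetCard_succ ha, hm, Nat.add_sub_cancel, Nat.add_one_mul_choose_eq,
      mul_comm]

theorem sum_filter_mem_powersetCard_succ (ha : a ∈ s) (e : ℕ) (g : Finset α → M) :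
    ∑ S ∈ s.powersetCard (e + 1) with a ∈ S, g S =
      ∑ T ∈ (s.erase a).powersetCard e, g (insert a T) := by
  symm
  refine sum_nbij' (insert a) (erase · a) (fun T hT => ?_) (fun S hS => ?_) (fun T hT => ?_)
    (fun S hS => ?_) (fun _ _ => rfl)
  · have haT : a ∉ T := fun h => by simpa using (mem_powersetCard.1 hT).1 h
    simp only [mem_filter, mem_powersetCard, mem_insert_self, and_true] at hT ⊢
    exact ⟨insert_subset ha (hT.1.trans (erase_subset a s)),
      by rw [card_insert_of_notMem haT, hT.2]⟩
  · simp only [mem_filter, mem_powersetCard] at hS ⊢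
    exact ⟨erase_subset_erase a hS.1.1, by rw [card_erase_of_mem hS.2, hS.1.2, Nat.add_sub_cancel]⟩
  · exact erase_insert fun h => by simpa using (mem_powersetCard.1 hT).1 h
  · exact insert_erase (mem_filter.1 hS).2

theorem sum_powersetCard_sum_nsmul (n : ℕ) (f : α → M) :
    #s • ∑ T ∈ s.powersetCard n, ∑ v ∈ T, f v = (n * (#s).choose n) • ∑ v ∈ s, f v := by
  have hswap : ∑ T ∈ s.powersetCard n, ∑ v ∈ T, f v =
      ∑ v ∈ s, #{T ∈ s.powersetCard n | v ∈ T} • f v := by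
    rw [sum_comm' (t' := s) (s' := fun v => {T ∈ s.powersetCard n | v ∈ T})]
    · simp only [sum_const]
    · intro T v
      simp only [mem_powersetCard, mem_filter]
      exact ⟨fun h => ⟨⟨h.1, h.2⟩, h.1.1 h.2⟩, fun h => ⟨h.1.1, h.1.2⟩⟩
  rw [hswap, smul_sum, smul_sum]
  refine sum_congr rfl fun v hv => ?_
  rw [smul_smul, card_mul_card_filter_mem_powersetCard hv]

theorem card_sub_one_nsmul_sum_filter_mem_powersetCard_succ (ha : a ∈ s) (e : ℕ) (f : α → M) :
    (#s - 1) • ∑ S ∈ s.powersetCard (e + 1) with a ∈ S, ∑ v ∈ S, f v =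
      (#s - 1).choose e • ((#s - 1) • f a + e • ∑ v ∈ s.erase a, f v) := by
  have hsum := sum_powersetCard_sum_nsmul (s := s.erase a) e f
  rw [card_erase_of_mem ha] at hsum
  have hinsert : ∀ T ∈ (s.erase a).powersetCard e, ∑ v ∈ insert a T, f v = f a + ∑ v ∈ T, f v :=
    fun T hT => sum_insert fun h => by simpa using (mem_powersetCard.1 hT).1 h
  rw [sum_filter_mem_powersetCard_succ ha, sum_congr rfl hinsert, sum_add_distrib, sum_const,
    card_powersetCard, card_erase_of_mem ha, smul_add, hsum, smul_add, smul_smul, smul_smul,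
    smul_smul, mul_comm, mul_comm e]

end PowersetCard

section Product

variable {ι Y R : Type*} [Fintype ι] [DecidableEq ι] [Fintype Y] [CommSemiring R] {m : Y → R}

theorem sum_prod_eq_one (hm : ∑ z, m z = 1) : ∑ y : ι → Y, ∏ j, m (y j) = 1 := by
  rw [← Fintype.prod_sum (fun _ => m), hm, prod_const_one]

theorem sum_prod_mul_apply (hm : ∑ z, m z = 1) (g : Y → R) (j₀ : ι) :
    ∑ y : ι → Y, (∏ j, m (y j)) * g (y j₀) = ∑ z, m z * g z := by
  have hfactor : ∀ y : ι → Y, (∏ j, m (y j)) * g (y j₀) =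
      ∏ j, m (y j) * (if j = j₀ then g (y j) else 1) := fun y => by
    rw [prod_mul_distrib, Fintype.prod_ite_eq']
  simp_rw [hfactor]
  rw [← Fintype.prod_sum (fun j z => m z * if j = j₀ then g z else 1),
    Fintype.prod_eq_single j₀ fun j hj => by simp [hj, hm]]
  simp

theorem sum_prod_mul_card_filter (hm : ∑ z, m z = 1) (P : Y → Prop) [DecidablePred P] :
    ∑ y : ι → Y, (∏ j, m (y j)) * (#{j | P (y j)} : R) =
      Fintype.card ι * ∑ z with P z, m z := by
  simp_rw [natCast_card_filter, mul_sum univ]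
  rw [sum_comm]
  simp_rw [sum_prod_mul_apply hm (fun z => if P z then (1 : R) else 0), mul_ite, mul_one,
    mul_zero, ← sum_filter, sum_const, card_univ, nsmul_eq_mul]

end Product

section Scheme

variable {k d : ℕ} {ε : ℝ}

noncomputable def schemeNorm (k : ℕ) (ε : ℝ) (d : ℕ) : ℝ :=
  (k - 1).choose (d - 1) * exp ε + (k - 1).choose d

theorem schemeP_eq (i : Fin k) (y : Out k d) :
    schemeP k ε d i y = (if i ∈ y.1 then exp ε else 1) / schemeNorm k ε d := rfl

theorem schemeNorm_pos (hdk : d ≤ k) : 0 < schemeNorm k ε d := by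
  have : (0 : ℝ) < (k - 1).choose (d - 1) := by exact_mod_cast Nat.choose_pos (by omega)
  unfold schemeNorm
  positivity

theorem sum_out_eq_sum_powersetCard {M : Type*} [AddCommMonoid M] (f : Finset (Fin k) → M) :
    ∑ y : Out k d, f y.1 = ∑ S ∈ univ.powersetCard d, f S :=
  (sum_subtype _ (fun S => by simp [mem_powersetCard]) f).symm

theorem sum_schemeP (hd : 1 ≤ d) (hdk : d ≤ k) (i : Fin k) : ∑ y, schemeP k ε d i y = 1 := by
  obtain ⟨e, rfl⟩ : ∃ e, d = e + 1 := ⟨d - 1, by omega⟩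
  simp_rw [schemeP_eq]
  rw [sum_out_eq_sum_powersetCard (fun S => (if i ∈ S then exp ε else 1) / schemeNorm k ε (e + 1)),
    ← sum_div, sum_ite, sum_const, sum_const, card_filter_mem_powersetCard_succ (mem_univ i),
    filter_notMem_powersetCard, card_powersetCard, card_erase_of_mem (mem_univ i), card_univ,
    Fintype.card_fin, nsmul_eq_mul, nsmul_eq_mul, mul_one,
    div_eq_one_iff_eq (schemeNorm_pos hdk).ne']
  rfl

theorem sum_margP (hd : 1 ≤ d) (hdk : d ≤ k) {p : Fin k → ℝ} (hp : ∑ i, p i = 1) :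
    ∑ y, margP k ε d p y = 1 := by
  simp_rw [margP]
  rw [sum_comm]
  simp_rw [← mul_sum, sum_schemeP hd hdk, mul_one, hp]

theorem margP_eq {p : Fin k → ℝ} (hp : ∑ i, p i = 1) (y : Out k d) :
    margP k ε d p y = (1 + (exp ε - 1) * ∑ i ∈ y.1, p i) / schemeNorm k ε d := by
  have hsplit : ∀ i, p i * schemeP k ε d i y =
      (p i + (exp ε - 1) * if i ∈ y.1 then p i else 0) / schemeNorm k ε d := fun i => by
    rw [schemeP_eq]; split_ifs <;> ring
  rw [margP, sum_congr rfl fun i _ => hsplit i, ← sum_div, sum_add_distrib, hp, ← mul_sum,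
    ← sum_filter, filter_mem_eq_inter, univ_inter]

theorem natCast_mul_schemeNorm (hd : 1 ≤ d) (hdk : d ≤ k) :
    d * schemeNorm k ε d = (k - 1).choose (d - 1) * (d * exp ε + k - d) := by
  obtain ⟨e, rfl⟩ : ∃ e, d = e + 1 := ⟨d - 1, by omega⟩
  have h := congrArg (Nat.cast : ℕ → ℝ) (Nat.choose_succ_right_eq (k - 1) e)
  rw [Nat.sub_sub] at h
  push_cast [Nat.cast_sub (show 1 + e ≤ k by omega)] at h ⊢
  rw [schemeNorm, Nat.add_sub_cancel]
  linear_combination h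

theorem sum_filter_mem_margP_eq {e : ℕ} {p : Fin k → ℝ} (hp : ∑ i, p i = 1) (i : Fin k) :
    ∑ y with i ∈ y.1, margP k ε (e + 1) p y =
      ((k - 1).choose e + (exp ε - 1) * ∑ S ∈ univ.powersetCard (e + 1) with i ∈ S, ∑ v ∈ S, p v) /
        schemeNorm k ε (e + 1) := by
  rw [sum_filter]
  simp_rw [margP_eq hp]
  rw [sum_out_eq_sum_powersetCard (fun S => if i ∈ S then
      (1 + (exp ε - 1) * ∑ v ∈ S, p v) / schemeNorm k ε (e + 1) else 0), ← sum_filter,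
    ← sum_div, sum_add_distrib, sum_const, card_filter_mem_powersetCard_succ (mem_univ i),
    card_univ, Fintype.card_fin, ← mul_sum, nsmul_eq_mul, mul_one]

theorem sub_one_mul_sum_filter_mem_powersetCard_univ {p : Fin k → ℝ} (hp : ∑ i, p i = 1)
    (i : Fin k) (e : ℕ) :
    ((k : ℝ) - 1) * ∑ S ∈ univ.powersetCard (e + 1) with i ∈ S, ∑ v ∈ S, p v =
      (k - 1).choose e * ((k - 1) * p i + e * (1 - p i)) := by
  have h := card_sub_one_nsmul_sum_filter_mem_powersetCard_succ (mem_univ i) e p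
  have herase : ∑ v ∈ univ.erase i, p v = 1 - p i := by
    rw [← hp, ← add_sum_erase _ _ (mem_univ i), add_sub_cancel_left]
  simp only [card_univ, Fintype.card_fin, nsmul_eq_mul,
    Nat.cast_sub (Nat.one_le_of_lt i.pos), Nat.cast_one] at h
  rw [h, herase]

theorem sum_filter_mem_margP (hε : ε ≠ 0) (hd : 1 ≤ d) (hdk : d ≤ k - 1) {p : Fin k → ℝ}
    (hp : ∑ i, p i = 1) (i : Fin k) :
    ∑ y with i ∈ y.1, margP k ε d p y = (p i + Bconst k d ε) / Aconst k d ε := by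
  have hZ := natCast_mul_schemeNorm (ε := ε) hd (by omega : d ≤ k)
  obtain ⟨e, rfl⟩ : ∃ e, d = e + 1 := ⟨d - 1, by omega⟩
  have hpair := sub_one_mul_sum_filter_mem_powersetCard_univ hp i e
  have hN := (schemeNorm_pos (ε := ε) (by omega : e + 1 ≤ k)).ne'
  have hE : exp ε - 1 ≠ 0 := sub_ne_zero.2 (by simpa using hε)
  have hkd : (0 : ℝ) < k - (e + 1) := by
    rw [sub_pos]; exact_mod_cast (by omega : e + 1 < k)
  have hk1 : (k : ℝ) - 1 ≠ 0 := by linarith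
  have hden : exp ε * (e + 1) + (k - (e + 1)) ≠ 0 := by positivity
  rw [sum_filter_mem_margP_eq hp, Aconst, Bconst]
  push_cast at hZ ⊢
  field_simp
  linear_combination (exp ε - 1) * ((e + 1) * exp ε + k - (e + 1)) * hpair -
    ((exp ε - 1) * p i * (k - (e + 1)) + exp ε * e + k - (e + 1)) * hZ

theorem Aconst_ne_zero (hε : ε ≠ 0) (hd : 1 ≤ d) (hdk : d ≤ k - 1) : Aconst k d ε ≠ 0 := by
  have hE : exp ε - 1 ≠ 0 := sub_ne_zero.2 (by simpa using hε)
  have hkd : (0 : ℝ) < k - d := by rw [sub_pos]; exact_mod_cast (by omega : d < k)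
  have hk1 : (0 : ℝ) < k - 1 := by linarith [(by exact_mod_cast hd : (1 : ℝ) ≤ d)]
  unfold Aconst
  positivity

end Scheme

theorem statement12_general (k : ℕ) (ε : ℝ) (hε : 0 < ε) (d n : ℕ)
    (hd1 : 1 ≤ d) (hdk : d ≤ k - 1) (hn : 1 ≤ n)
    (p : Fin k → ℝ) (hp : p ∈ simplex k) (i : Fin k) :
    (∑ y : Fin n → Out k d, (∏ j, margP k ε d p (y j)) * empEst k d n ε y i = p i) ∧
    (∑ y ∈ Finset.univ.filter (fun y : Out k d => i ∈ y.1), margP k ε d p y =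
        (p i + Bconst k d ε) / Aconst k d ε) := by
  have hprob := sum_filter_mem_margP hε.ne' hd1 hdk hp.2 i
  refine ⟨?_, hprob⟩
  have hm := sum_margP (ε := ε) hd1 (by omega) hp.2
  have hA := Aconst_ne_zero hε.ne' hd1 hdk
  have hn' : (n : ℝ) ≠ 0 := by exact_mod_cast (by omega : n ≠ 0)
  have hcount : ∑ y : Fin n → Out k d, (∏ j, margP k ε d p (y j)) * (tcount i y : ℝ) =
      n * ∑ y with i ∈ y.1, margP k ε d p y :=
    (sum_prod_mul_card_filter hm fun z : Out k d => i ∈ z.1).trans (by rw [Fintype.card_fin])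
  calc ∑ y : Fin n → Out k d, (∏ j, margP k ε d p (y j)) * empEst k d n ε y i
      = Aconst k d ε / n * ∑ y : Fin n → Out k d, (∏ j, margP k ε d p (y j)) * (tcount i y : ℝ)
          - Bconst k d ε * ∑ y : Fin n → Out k d, ∏ j, margP k ε d p (y j) := by
        rw [mul_sum, mul_sum, ← sum_sub_distrib]
        exact sum_congr rfl fun y _ => by rw [empEst]; ring
    _ = p i := by
        rw [hcount, sum_prod_eq_one hm, hprob]
        field_simp
        ring

theorem statement12 (k : ℕ) (hk : 2 ≤ k) (ε : ℝ) (hε : 0 < ε) (d n : ℕ)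
    (hd1 : 1 ≤ d) (hdk : d ≤ k - 1) (hn : 1 ≤ n)
    (p : Fin k → ℝ) (hp : p ∈ simplex k) (i : Fin k) :
    (∑ y : Fin n → Out k d, (∏ j, margP k ε d p (y j)) * empEst k d n ε y i = p i) ∧
    (∑ y ∈ Finset.univ.filter (fun y : Out k d => i ∈ y.1), margP k ε d p y =
        (p i + Bconst k d ε) / Aconst k d ε) :=
  statement12_general k ε hε d n hd1 hdk hn p hp i
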